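/- arXiv:2210.11791 — 4 statements merged into one kernel-verified Lean document; each statement's English description precedes it below -/
import Mathlib

section
/- Let D be a strongly connected digraph with arc set A, and let S ⊆ A be such that every vertex v satisfies: either all incoming arcs of v are in S, or no outgoing arc of v is in S. Then S = ∅ or S = A. -/
/-- In a strongly connected digraph with arc set A, if the triggered set S ⊆ A is such
that every vertex either has all its incoming arcs triggered or no outgoing arc triggered,
then S = ∅ or S = A. -/
theorem stmt_6 {V : Type*} (A S : Set (V × V)) (hSA : S ⊆ A)
    (hconn : ∀ u w : V, Relation.ReflTransGen (fun a b => (a, b) ∈ A) u w)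
    (hacc : ∀ v : V, (∀ a ∈ A, a.2 = v → a ∈ S) ∨ (∀ a ∈ A, a.1 = v → a ∉ S)) :
    S = ∅ ∨ S = A := by
  rcases Set.eq_empty_or_nonempty S with h | ⟨⟨u₀, v₀⟩, huv⟩
  · exact Or.inl h
  right
  -- Q v : all incoming arcs of v are in S
  have key : ∀ v w : V, (v, w) ∈ S → ∀ a ∈ A, a.2 = v → a ∈ S := by
    intro v w hvw a ha hav
    rcases hacc v with h | h
    · exact h a ha hav
    · exact absurd hvw (h (v, w) (hSA hvw) rfl)
  have prop : ∀ v w : V, Relation.ReflTransGen (fun a b => (a, b) ∈ A) v w →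
      (∀ a ∈ A, a.2 = w → a ∈ S) → ∀ a ∈ A, a.2 = v → a ∈ S := by
    intro v w h
    induction h using Relation.ReflTransGen.head_induction_on with
    | refl => exact fun hQ => hQ
    | head hvc _ ih =>
      intro hQ
      rename_i b c _
      exact key b c (ih hQ (b, c) hvc rfl)
  have Qu₀ : ∀ a ∈ A, a.2 = u₀ → a ∈ S := by
    rcases hacc u₀ with h | h
    · exact h
    · exact absurd huv (h (u₀, v₀) (hSA huv) rfl)
  apply Set.eq_of_subset_of_subset hSA
  rintro ⟨a, b⟩ hab
  exact prop b u₀ (hconn b u₀) Qu₀ (a, b) hab rfl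
end

section
/- In the h-swap preference order, the set of outcomes strictly below NoDeal is {ω : ω ≺ NoDeal} = {⟨i,o⟩ : o ≠ ∅ ∧ i ≠ Ain}. -/
/-- In the h-swap preference order (the order generated by the generic order together
with the pairs ω ≺ NoDeal for ω ∈ Underwater, closed under reflexivity and
transitivity), the outcomes strictly below NoDeal are exactly the Underwater outcomes:
{ω : ω ≺ NoDeal} = {⟨i,o⟩ : o ≠ ∅ ∧ i ≠ Ain}. -/
theorem stmt_13 {α β : Type*} (Ain : Set α) (Aout : Set β)
    (hAin : Ain.Nonempty) (hAout : Aout.Nonempty)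
    (Ω Underwater : Set (Set α × Set β))
    (hΩ : Ω = {p | p.1 ⊆ Ain ∧ p.2 ⊆ Aout})
    (hU : Underwater = {p ∈ Ω | p.1 ≠ Ain ∧ p.2 ≠ ∅})
    (gen : Set α × Set β → Set α × Set β → Prop)
    (hgen : ∀ ω ω', gen ω ω' ↔ ω ∈ Ω ∧ ω' ∈ Ω ∧
      ((ω.1 ⊆ ω'.1 ∧ ω'.2 ⊆ ω.2) ∨
       (ω ∈ Underwater ∧ ω' = ((∅ : Set α), (∅ : Set β)))))
    (pref : Set α × Set β → Set α × Set β → Prop)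
    (hpref : ∀ ω ω', pref ω ω' ↔ Relation.ReflTransGen gen ω ω') :
    {ω ∈ Ω | pref ω ((∅ : Set α), (∅ : Set β)) ∧ ω ≠ ((∅ : Set α), (∅ : Set β))} =
      {p ∈ Ω | p.2 ≠ ∅ ∧ p.1 ≠ Ain} := by
  have key : ∀ ω, Relation.ReflTransGen gen ω ((∅ : Set α), (∅ : Set β)) →
      ω ∈ Underwater ∨ ω = ((∅ : Set α), (∅ : Set β)) := by
    intro ω h
    induction h using Relation.ReflTransGen.head_induction_on with
    | refl => exact Or.inr rfl
    | head hgac _ ih =>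
      rename_i a c _
      rw [hgen] at hgac
      obtain ⟨haΩ, hcΩ, hcase⟩ := hgac
      rcases ih with hcU | hcND
      · -- c ∈ Underwater
        rw [hU] at hcU
        obtain ⟨hcΩ', hc1, hc2⟩ := hcU
        rcases hcase with ⟨h1, h2⟩ | ⟨haU, _⟩
        · left
          rw [hU]
          refine ⟨haΩ, ?_, ?_⟩
          · intro ha1
            apply hc1
            have hsub : (_root_.id c).1 ⊆ Ain := (hΩ ▸ hcΩ').1
            rw [ha1] at h1
            exact Set.Subset.antisymm hsub h1
          · intro ha2
            apply hc2
            rw [ha2] at h2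
            exact Set.subset_empty_iff.mp h2
        · exact Or.inl haU
      · -- c = NoDeal
        subst hcND
        rcases hcase with ⟨h1, _⟩ | ⟨haU, _⟩
        · have ha1 : a.1 = ∅ := Set.subset_empty_iff.mp h1
          by_cases ha2 : a.2 = ∅
          · right
            exact Prod.ext ha1 ha2
          · left
            rw [hU]
            refine ⟨haΩ, ?_, ha2⟩
            rw [ha1]
            exact fun h => hAin.ne_empty h.symm
        · exact Or.inl haU
  ext ω
  simp only [Set.mem_setOf_eq, hpref]
  constructor
  · rintro ⟨hωΩ, hrt, hne⟩
    rcases key ω hrt with hωU | h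
    · rw [hU] at hωU
      exact ⟨hωΩ, hωU.2.2, hωU.2.1⟩
    · exact absurd h hne
  · rintro ⟨hωΩ, ho, hi⟩
    have hωU : ω ∈ Underwater := by rw [hU]; exact ⟨hωΩ, hi, ho⟩
    have hNDΩ : ((∅ : Set α), (∅ : Set β)) ∈ Ω := by
      rw [hΩ]; exact ⟨Set.empty_subset _, Set.empty_subset _⟩
    refine ⟨hωΩ, Relation.ReflTransGen.single ?_, ?_⟩
    · rw [hgen]; exact ⟨hωΩ, hNDΩ, Or.inr ⟨hωU, rfl⟩⟩
    · intro h; exact ho (by rw [h])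
end

section
/- Consider the 4-party swap system with vertices u, v, x, y and arcs (u,x), (x,v), (u,v), (v,u), (v,y), (y,u), where x and y have purely generic (h-swap) preferences, u's preference poset is generated by generic pairs plus Deal_u ≺ ⟨v|v⟩, and v's is generated by generic pairs plus Deal_v ≺ ⟨u|u⟩. Then every spanning subgraph G of D that is piece-wise strongly connected with no isolated vertices and dominates D must equal D itself, and D is strictly dominated by the subgraph H with vertex set {u,v} and arcs {(u,v),(v,u)}. Consequently no spanning subgraph of D satisfies all three characterization conditions (c.1)–(c.3). -/
/-- The four-party swap system with vertices u, v, x, y and arcs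
(u,x), (x,v), (u,v), (v,u), (v,y), (y,u), where x and y have h-swap preferences
(generic plus Underwater ≺ NoDeal), u's preferences are generated by the generic
pairs plus Deal_u ≺ ⟨v|v⟩, and v's by the generic pairs plus Deal_v ≺ ⟨u|u⟩.
Then: (1) every spanning subgraph G of D that is piece-wise strongly connected with
no isolated vertices and dominates D equals D; (2) D is strictly dominated by the
subgraph H on {u,v} with arcs {(u,v),(v,u)}; (3) consequently no spanning subgraph
of D satisfies all three characterization conditions (c.1)–(c.3). -/
theorem stmt_15
    (V : Type) (u v x y : V)
    (huv : u ≠ v) (hux : u ≠ x) (huy : u ≠ y) (hvx : v ≠ x) (hvy : v ≠ y) (hxy : x ≠ y)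
    (hall : ∀ z : V, z = u ∨ z = v ∨ z = x ∨ z = y)
    (D H : Set (V × V))
    (hD : D = {(u,x),(x,v),(u,v),(v,u),(v,y),(y,u)})
    (hH : H = {(u,v),(v,u)})
    (deal : Set (V × V) → V → Set V × Set V)
    (hdeal : ∀ S z, deal S z = ({p | (p, z) ∈ S}, {p | (z, p) ∈ S}))
    (valid : V → Set V × Set V → Prop)
    (hvalid : ∀ z ω, valid z ω ↔ ω.1 ⊆ {p | (p, z) ∈ D} ∧ ω.2 ⊆ {p | (z, p) ∈ D})
    (gen : V → Set V × Set V → Set V × Set V → Prop)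
    (hgen : ∀ z ω ω', gen z ω ω' ↔ valid z ω ∧ valid z ω' ∧
      ((ω.1 ⊆ ω'.1 ∧ ω'.2 ⊆ ω.2) ∨
       (z = u ∧ ω = deal D u ∧ ω' = ({v}, {v})) ∨
       (z = v ∧ ω = deal D v ∧ ω' = ({u}, {u})) ∨
       ((z = x ∨ z = y) ∧ ω.1 ≠ {p | (p, z) ∈ D} ∧ ω.2 ≠ (∅ : Set V) ∧
         ω' = ((∅ : Set V), (∅ : Set V)))))
    (pref : V → Set V × Set V → Set V × Set V → Prop)
    (hpref : ∀ z ω ω', pref z ω ω' ↔ Relation.ReflTransGen (gen z) ω ω') :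
    (∀ G : Set (V × V), G ⊆ D →
      (∀ z : V, ∃ a ∈ G, a.1 = z ∨ a.2 = z) →
      (∀ p q : V, Relation.ReflTransGen (fun a b => (a, b) ∈ G ∨ (b, a) ∈ G) p q →
        Relation.ReflTransGen (fun a b => (a, b) ∈ G) p q) →
      (∀ z : V, pref z (deal D z) (deal G z)) → G = D) ∧
    ((∀ z ∈ ({u, v} : Set V), pref z (deal D z) (deal H z)) ∧
      (∃ z ∈ ({u, v} : Set V), pref z (deal D z) (deal H z) ∧ deal D z ≠ deal H z)) ∧
    ¬ ∃ G : Set (V × V), G ⊆ D ∧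
        (∀ z : V, ∃ a ∈ G, a.1 = z ∨ a.2 = z) ∧
        (∀ p q : V, Relation.ReflTransGen (fun a b => (a, b) ∈ G ∨ (b, a) ∈ G) p q →
          Relation.ReflTransGen (fun a b => (a, b) ∈ G) p q) ∧
        (∀ z : V, pref z (deal D z) (deal G z)) ∧
        ¬ ∃ (C : Set V) (E : Set (V × V)), E ⊆ D ∧ (∀ a ∈ E, a.1 ∈ C ∧ a.2 ∈ C) ∧
            (∀ z ∈ C, pref z (deal G z) (deal E z)) ∧
            (∃ z ∈ C, pref z (deal G z) (deal E z) ∧ deal G z ≠ deal E z) := by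

  -- arc membership characterizations
  have hmemD : ∀ p q : V, ((p,q) ∈ D ↔
      (p=u∧q=x)∨(p=x∧q=v)∨(p=u∧q=v)∨(p=v∧q=u)∨(p=v∧q=y)∨(p=y∧q=u)) := by
    intro p q; simp [hD, Prod.ext_iff]
  -- in/out neighborhoods in D
  have inDu : {p : V | (p,u) ∈ D} = {v, y} := by
    ext p
    simp [hmemD, huv, hux, huy, hvx, hvy, hxy,
      Ne.symm huv, Ne.symm hux, Ne.symm huy, Ne.symm hvx, Ne.symm hvy, Ne.symm hxy]
  have outDu : {p : V | (u,p) ∈ D} = {x, v} := by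
    ext p
    simp [hmemD, huv, hux, huy, hvx, hvy, hxy,
      Ne.symm huv, Ne.symm hux, Ne.symm huy, Ne.symm hvx, Ne.symm hvy, Ne.symm hxy]
  have inDv : {p : V | (p,v) ∈ D} = {u, x} := by
    ext p
    simp [hmemD, huv, hux, huy, hvx, hvy, hxy,
      Ne.symm huv, Ne.symm hux, Ne.symm huy, Ne.symm hvx, Ne.symm hvy, Ne.symm hxy]
    tauto
  have outDv : {p : V | (v,p) ∈ D} = {u, y} := by
    ext p
    simp [hmemD, huv, hux, huy, hvx, hvy, hxy,
      Ne.symm huv, Ne.symm hux, Ne.symm huy, Ne.symm hvx, Ne.symm hvy, Ne.symm hxy]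
  have inDx : {p : V | (p,x) ∈ D} = {u} := by
    ext p
    simp [hmemD, huv, hux, huy, hvx, hvy, hxy,
      Ne.symm huv, Ne.symm hux, Ne.symm huy, Ne.symm hvx, Ne.symm hvy, Ne.symm hxy]
  have outDx : {p : V | (x,p) ∈ D} = {v} := by
    ext p
    simp [hmemD, huv, hux, huy, hvx, hvy, hxy,
      Ne.symm huv, Ne.symm hux, Ne.symm huy, Ne.symm hvx, Ne.symm hvy, Ne.symm hxy]
  have inDy : {p : V | (p,y) ∈ D} = {v} := by
    ext p
    simp [hmemD, huv, hux, huy, hvx, hvy, hxy,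
      Ne.symm huv, Ne.symm hux, Ne.symm huy, Ne.symm hvx, Ne.symm hvy, Ne.symm hxy]
  have outDy : {p : V | (y,p) ∈ D} = {u} := by
    ext p
    simp [hmemD, huv, hux, huy, hvx, hvy, hxy,
      Ne.symm huv, Ne.symm hux, Ne.symm huy, Ne.symm hvx, Ne.symm hvy, Ne.symm hxy]
  have dDu : deal D u = ({v,y}, {x,v}) := by rw [hdeal, inDu, outDu]
  have dDv : deal D v = ({u,x}, {u,y}) := by rw [hdeal, inDv, outDv]
  have dDx : deal D x = ({u}, {v}) := by rw [hdeal, inDx, outDx]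
  have dDy : deal D y = ({v}, {u}) := by rw [hdeal, inDy, outDy]
  -- invariant for x
  have keyx : ∀ ω, Relation.ReflTransGen (gen x) (deal D x) ω → ω.1 = {u} ∧ ω.2 ⊆ {v} := by
    intro ω h
    induction h with
    | refl => rw [dDx]; exact ⟨rfl, Set.Subset.refl _⟩
    | tail _ hbc ih =>
      rw [hgen] at hbc
      obtain ⟨_, hv2, hcase⟩ := hbc
      rw [hvalid] at hv2
      rcases hcase with ⟨h1, h2⟩ | ⟨hz, _⟩ | ⟨hz, _⟩ | ⟨_, hne, _, _⟩
      · refine ⟨Set.Subset.antisymm (inDx ▸ hv2.1) ?_, h2.trans ih.2⟩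
        rw [← ih.1]; exact h1
      · exact absurd hz (Ne.symm hux)
      · exact absurd hz (Ne.symm hvx)
      · rw [inDx] at hne; exact absurd ih.1 hne
  -- invariant for y
  have keyy : ∀ ω, Relation.ReflTransGen (gen y) (deal D y) ω → ω.1 = {v} ∧ ω.2 ⊆ {u} := by
    intro ω h
    induction h with
    | refl => rw [dDy]; exact ⟨rfl, Set.Subset.refl _⟩
    | tail _ hbc ih =>
      rw [hgen] at hbc
      obtain ⟨_, hv2, hcase⟩ := hbc
      rw [hvalid] at hv2
      rcases hcase with ⟨h1, h2⟩ | ⟨hz, _⟩ | ⟨hz, _⟩ | ⟨_, hne, _, _⟩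
      · refine ⟨Set.Subset.antisymm (inDy ▸ hv2.1) ?_, h2.trans ih.2⟩
        rw [← ih.1]; exact h1
      · exact absurd hz (Ne.symm huy)
      · exact absurd hz (Ne.symm hvy)
      · rw [inDy] at hne; exact absurd ih.1 hne
  -- invariant for u
  have keyu : ∀ ω, Relation.ReflTransGen (gen u) (deal D u) ω →
      (ω.1 = {v,y} ∧ ω.2 ⊆ {x,v}) ∨ (ω.1 ⊆ {v,y} ∧ ω.2 ⊆ {v}) := by
    intro ω h
    induction h with
    | refl => rw [dDu]; exact Or.inl ⟨rfl, Set.Subset.refl _⟩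
    | tail _ hbc ih =>
      rw [hgen] at hbc
      obtain ⟨_, hv2, hcase⟩ := hbc
      rw [hvalid] at hv2
      rcases hcase with ⟨h1, h2⟩ | ⟨_, _, hc⟩ | ⟨hz, _⟩ | ⟨hz, _⟩
      · rcases ih with ⟨i1, i2⟩ | ⟨i1, i2⟩
        · exact Or.inl ⟨Set.Subset.antisymm (inDu ▸ hv2.1) (by rw [← i1]; exact h1),
            h2.trans i2⟩
        · exact Or.inr ⟨inDu ▸ hv2.1, h2.trans i2⟩
      · rw [hc]
        exact Or.inr ⟨by intro p hp; simp at hp; simp [hp], by intro p hp; exact hp⟩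
      · exact absurd hz huv
      · rcases hz with hz | hz
        · exact absurd hz hux
        · exact absurd hz huy
  -- invariant for v
  have keyv : ∀ ω, Relation.ReflTransGen (gen v) (deal D v) ω →
      (ω.1 = {u,x} ∧ ω.2 ⊆ {u,y}) ∨ (ω.1 ⊆ {u,x} ∧ ω.2 ⊆ {u}) := by
    intro ω h
    induction h with
    | refl => rw [dDv]; exact Or.inl ⟨rfl, Set.Subset.refl _⟩
    | tail _ hbc ih =>
      rw [hgen] at hbc
      obtain ⟨_, hv2, hcase⟩ := hbc
      rw [hvalid] at hv2
      rcases hcase with ⟨h1, h2⟩ | ⟨hz, _⟩ | ⟨_, _, hc⟩ | ⟨hz, _⟩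
      · rcases ih with ⟨i1, i2⟩ | ⟨i1, i2⟩
        · exact Or.inl ⟨Set.Subset.antisymm (inDv ▸ hv2.1) (by rw [← i1]; exact h1),
            h2.trans i2⟩
        · exact Or.inr ⟨inDv ▸ hv2.1, h2.trans i2⟩
      · exact absurd hz (Ne.symm huv)
      · rw [hc]
        exact Or.inr ⟨by intro p hp; simp at hp; simp [hp], by intro p hp; exact hp⟩
      · rcases hz with hz | hz
        · exact absurd hz hvx
        · exact absurd hz hvy
  -- Part 1
  have part1 : ∀ G : Set (V × V), G ⊆ D →
      (∀ z : V, ∃ a ∈ G, a.1 = z ∨ a.2 = z) →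
      (∀ p q : V, Relation.ReflTransGen (fun a b => (a, b) ∈ G ∨ (b, a) ∈ G) p q →
        Relation.ReflTransGen (fun a b => (a, b) ∈ G) p q) →
      (∀ z : V, pref z (deal D z) (deal G z)) → G = D := by
    intro G hsub _ hpsc hdom
    have dGfst : ∀ z, (deal G z).1 = {p : V | (p,z) ∈ G} := fun z => by rw [hdeal]
    have dGsnd : ∀ z, (deal G z).2 = {p : V | (z,p) ∈ G} := fun z => by rw [hdeal]
    have hGx := keyx _ ((hpref x _ _).mp (hdom x))
    have hGy := keyy _ ((hpref y _ _).mp (hdom y))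
    -- (u,x) ∈ G
    have huxG : (u,x) ∈ G := by
      have h1 : ({p : V | (p,x) ∈ G}) = {u} := by rw [← dGfst]; exact hGx.1
      have h2 : u ∈ ({u} : Set V) := rfl
      rw [← h1] at h2; exact h2
    -- (v,y) ∈ G
    have hvyG : (v,y) ∈ G := by
      have h1 : ({p : V | (p,y) ∈ G}) = {v} := by rw [← dGfst]; exact hGy.1
      have h2 : v ∈ ({v} : Set V) := rfl
      rw [← h1] at h2; exact h2
    -- (x,v) ∈ G by strong connectivity
    have hxvG : (x,v) ∈ G := by
      have hdir := hpsc x u (Relation.ReflTransGen.single (Or.inr huxG))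
      rcases Relation.ReflTransGen.cases_head hdir with heq | ⟨w, hw, _⟩
      · exact absurd heq (Ne.symm hux)
      · rcases (hmemD x w).mp (hsub hw) with ⟨h1,_⟩|⟨_,h2⟩|⟨h1,_⟩|⟨h1,_⟩|⟨h1,_⟩|⟨h1,_⟩
        · exact absurd h1 (Ne.symm hux)
        · exact h2 ▸ hw
        · exact absurd h1 (Ne.symm hux)
        · exact absurd h1 (Ne.symm hvx)
        · exact absurd h1 (Ne.symm hvx)
        · exact absurd h1 hxy
    -- (y,u) ∈ G by strong connectivity
    have hyuG : (y,u) ∈ G := by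
      have hdir := hpsc y v (Relation.ReflTransGen.single (Or.inr hvyG))
      rcases Relation.ReflTransGen.cases_head hdir with heq | ⟨w, hw, _⟩
      · exact absurd heq (Ne.symm hvy)
      · rcases (hmemD y w).mp (hsub hw) with ⟨h1,_⟩|⟨h1,_⟩|⟨h1,_⟩|⟨h1,_⟩|⟨h1,_⟩|⟨_,h2⟩
        · exact absurd h1 (Ne.symm huy)
        · exact absurd h1 (Ne.symm hxy)
        · exact absurd h1 (Ne.symm huy)
        · exact absurd h1 (Ne.symm hvy)
        · exact absurd h1 (Ne.symm hvy)
        · exact h2 ▸ hw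
    -- (v,u) ∈ G from u's invariant
    have hvuG : (v,u) ∈ G := by
      have hGu := keyu _ ((hpref u _ _).mp (hdom u))
      have hxmem : x ∈ (deal G u).2 := by rw [dGsnd]; exact huxG
      rcases hGu with ⟨h1, _⟩ | ⟨_, h2⟩
      · have : v ∈ (deal G u).1 := by rw [h1]; simp
        rw [dGfst] at this; exact this
      · have := h2 hxmem
        simp at this
        exact absurd this (Ne.symm hvx)
    -- (u,v) ∈ G from v's invariant
    have huvG : (u,v) ∈ G := by
      have hGv := keyv _ ((hpref v _ _).mp (hdom v))
      have hymem : y ∈ (deal G v).2 := by rw [dGsnd]; exact hvyG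
      rcases hGv with ⟨h1, _⟩ | ⟨_, h2⟩
      · have : u ∈ (deal G v).1 := by rw [h1]; simp
        rw [dGfst] at this; exact this
      · have := h2 hymem
        simp at this
        exact absurd this (Ne.symm huy)
    refine Set.Subset.antisymm hsub ?_
    intro a ha
    rw [hD] at ha
    simp only [Set.mem_insert_iff, Set.mem_singleton_iff] at ha
    rcases ha with h|h|h|h|h|h <;> subst h <;> assumption
  -- deal H computations
  have hmemH : ∀ p q : V, ((p,q) ∈ H ↔ (p=u∧q=v)∨(p=v∧q=u)) := by
    intro p q; simp [hH, Prod.ext_iff]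
  have dHu : deal H u = ({v}, {v}) := by
    rw [hdeal]
    have h1 : {p : V | (p,u) ∈ H} = {v} := by
      ext p; simp [hmemH, huv, Ne.symm huv]
    have h2 : {p : V | (u,p) ∈ H} = {v} := by
      ext p; simp [hmemH, huv, Ne.symm huv]
    rw [h1, h2]
  have dHv : deal H v = ({u}, {u}) := by
    rw [hdeal]
    have h1 : {p : V | (p,v) ∈ H} = {u} := by
      ext p; simp [hmemH, huv, Ne.symm huv]
    have h2 : {p : V | (v,p) ∈ H} = {u} := by
      ext p; simp [hmemH, huv, Ne.symm huv]
    rw [h1, h2]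
  -- Part 2 preferences
  have prefDHu : pref u (deal D u) (deal H u) := by
    rw [hpref]
    refine Relation.ReflTransGen.single ?_
    rw [hgen]
    refine ⟨?_, ?_, Or.inr (Or.inl ⟨rfl, rfl, dHu⟩)⟩
    · rw [hvalid, dDu, inDu, outDu]
      exact ⟨Set.Subset.refl _, Set.Subset.refl _⟩
    · rw [hvalid, dHu, inDu, outDu]
      constructor
      · intro p hp; simp at hp; simp [hp]
      · intro p hp; simp at hp; simp [hp]
  have prefDHv : pref v (deal D v) (deal H v) := by
    rw [hpref]
    refine Relation.ReflTransGen.single ?_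
    rw [hgen]
    refine ⟨?_, ?_, Or.inr (Or.inr (Or.inl ⟨rfl, rfl, dHv⟩))⟩
    · rw [hvalid, dDv, inDv, outDv]
      exact ⟨Set.Subset.refl _, Set.Subset.refl _⟩
    · rw [hvalid, dHv, inDv, outDv]
      constructor
      · intro p hp; simp at hp; simp [hp]
      · intro p hp; simp at hp; simp [hp]
  have hstrictu : deal D u ≠ deal H u := by
    rw [dDu, dHu]
    intro h
    have h1 : ({v, y} : Set V) = {v} := congrArg Prod.fst h
    have h2 : y ∈ ({v, y} : Set V) := by simp
    rw [h1] at h2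
    simp at h2
    exact hvy h2.symm
  refine ⟨part1, ⟨?_, ⟨u, by simp, prefDHu, hstrictu⟩⟩, ?_⟩
  · intro z hz
    simp only [Set.mem_insert_iff, Set.mem_singleton_iff] at hz
    rcases hz with hz | hz <;> subst hz
    · exact prefDHu
    · exact prefDHv
  · rintro ⟨G, hsub, hcov, hpsc, hdom, hno⟩
    have hGD := part1 G hsub hcov hpsc hdom
    subst hGD
    refine hno ⟨{u, v}, H, ?_, ?_, ?_, ⟨u, by simp, prefDHu, hstrictu⟩⟩
    · rw [hH, hD]
      intro a ha
      simp only [Set.mem_insert_iff, Set.mem_singleton_iff] at ha ⊢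
      tauto
    · intro a ha
      rw [hH] at ha
      simp only [Set.mem_insert_iff, Set.mem_singleton_iff] at ha
      rcases ha with h | h <;> subst h <;> simp
    · intro z hz
      simp only [Set.mem_insert_iff, Set.mem_singleton_iff] at hz
      rcases hz with hz | hz <;> subst hz
      · exact prefDHu
      · exact prefDHv
end

section
/- Let D be a digraph whose arc set is partitioned as triggered set S. If a subset C of vertices has the property that no arc of S enters C from outside and at least one arc of S leaves C, then replacing S by S restricted to arcs internal to C weakly improves, in the generic order, the outcome of every vertex in C, and strictly improves the outcome of at least one vertex in C. -/
/-- If a set C of vertices has no triggered arc entering it from outside but at least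
one triggered arc leaving it, then replacing the triggered set S by its restriction S'
to arcs internal to C weakly improves (generic order) the outcome of every vertex of C
and strictly improves the outcome of at least one vertex of C. -/
theorem stmt_16 {V : Type*} (A S : Set (V × V)) (hSA : S ⊆ A) (C : Set V)
    (hno_in : ∀ a ∈ S, a.2 ∈ C → a.1 ∈ C)
    (hout : ∃ a ∈ S, a.1 ∈ C ∧ a.2 ∉ C)
    (S' : Set (V × V)) (hS' : S' = {a ∈ S | a.1 ∈ C ∧ a.2 ∈ C})
    (outcome : Set (V × V) → V → Set (V × V) × Set (V × V))
    (houtcome : ∀ T z, outcome T z = ({a ∈ T | a.2 = z}, {a ∈ T | a.1 = z}))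
    (pref : Set (V × V) × Set (V × V) → Set (V × V) × Set (V × V) → Prop)
    (hpref : ∀ p q, pref p q ↔ p.1 ⊆ q.1 ∧ q.2 ⊆ p.2) :
    (∀ z ∈ C, pref (outcome S z) (outcome S' z)) ∧
    (∃ z ∈ C, pref (outcome S z) (outcome S' z) ∧ outcome S z ≠ outcome S' z) := by
  have hweak : ∀ z ∈ C, pref (outcome S z) (outcome S' z) := by
    intro z hz
    rw [hpref, houtcome, houtcome]
    constructor
    · intro a ha
      simp only [Set.mem_setOf_eq] at ha ⊢
      refine ⟨?_, ha.2⟩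
      rw [hS']
      exact ⟨ha.1, hno_in a ha.1 (ha.2 ▸ hz), ha.2 ▸ hz⟩
    · intro a ha
      simp only [Set.mem_setOf_eq, hS'] at ha ⊢
      exact ⟨ha.1.1, ha.2⟩
  refine ⟨hweak, ?_⟩
  obtain ⟨a, haS, ha1, ha2⟩ := hout
  refine ⟨a.1, ha1, hweak a.1 ha1, ?_⟩
  intro h
  have := congrArg Prod.snd h
  rw [houtcome, houtcome] at this
  simp only at this
  have ha : a ∈ {b ∈ S | b.1 = a.1} := ⟨haS, rfl⟩
  rw [this] at ha
  simp only [Set.mem_setOf_eq, hS'] at ha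
  exact ha2 ha.1.2.2
end
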